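/- Let A and B be disjoint finite sets of points in the plane such that A ∪ B is not contained in a single line. Then the bivisibility graph B(A,B) is connected if and only if it has no isolated vertices (vertices of degree 0). -/

import Mathlib

/-!
Induction on `#(A ∪ B)`. Let `h` be an extreme point of `A ∪ B`, say `h ∈ A`; it lies strictly
between no two points, so it never blocks a segment. Call a vertex pendant if its only neighbour is
`h` (it then lies in `B`), and let `P` be the set of vertices other than `h` that are not pendant.

If `P` is collinear, the point of `A ∪ B` off the line of `P` nearest to it sees the whole line;
not being pendant, it must be `h`, so `h` sees every vertex of `P`. Otherwise the induction
hypothesis applies to `P`: deleting the pendant vertices can only create adjacencies, and a new one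
`a b` with `a ∈ A` would be blocked by a pendant vertex that `a` sees, which is absurd. So `P` is
connected in `B(A,B)`, and it remains to find a neighbour of `h` in `P`: among the pairs `(s, t)`
with `s ∈ B` a neighbour of `h` and `t ∈ A` off the line `h s`, the triangle `h s t` of least area
has `s` seeing `t`, so `s ∈ P`.
-/

/-- Adjacency in the bivisibility graph: one point from `A` and one from `B`, mutually
visible with respect to `A ∪ B` (no point of `A ∪ B` in the open segment between them). -/
def BivisAdj (A B : Finset (ℝ × ℝ)) (x y : ℝ × ℝ) : Prop :=
  x ≠ y ∧ ((x ∈ A ∧ y ∈ B) ∨ (x ∈ B ∧ y ∈ A)) ∧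
    ∀ p ∈ A ∪ B, p ∉ openSegment ℝ x y

/-- The bivisibility graph `B(A,B)` of two finite point sets in the plane. -/
def bivisibilityGraph (A B : Finset (ℝ × ℝ)) : SimpleGraph {p : ℝ × ℝ // p ∈ A ∪ B} where
  Adj u v := BivisAdj A B u.1 v.1
  symm := by
    constructor
    rintro u v ⟨hne, hab, h⟩
    refine ⟨hne.symm, by tauto, fun p hp => ?_⟩
    rw [openSegment_symm]
    exact h p hp
  loopless := by constructor; rintro u ⟨hne, -⟩; exact hne rfl

open AffineMap Relation

section Module

variable {V : Type*} [AddCommGroup V] [Module ℝ V] {s : Set V} {x y : V}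

theorem isVisible_iff_forall_notMem_openSegment (hxy : x ≠ y) :
    IsVisible ℝ s x y ↔ ∀ p ∈ s, p ∉ openSegment ℝ x y := by
  simp [IsVisible, sbtw_iff_mem_image_Ioo_and_ne, openSegment_eq_image_lineMap, hxy]

theorem Set.Finite.exists_isVisible_of_map_sub_eq_zero (hs : s.Finite) (φ : V →ₗ[ℝ] ℝ) (x : V)
    (hoff : ∃ p ∈ s, φ (p - x) ≠ 0) :
    ∃ z ∈ s, φ (z - x) ≠ 0 ∧ ∀ l, φ (l - x) = 0 → IsVisible ℝ s z l := by
  obtain ⟨z, ⟨hz, hzx⟩, hmin⟩ := Set.exists_min_image {p ∈ s | φ (p - x) ≠ 0}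
    (fun p => |φ (p - x)|) (hs.subset fun _ hp => hp.1) hoff
  refine ⟨z, hz, hzx, fun l hl p hp hzpl => ?_⟩
  obtain ⟨τ, ⟨hτ0, hτ1⟩, rfl⟩ := hzpl.mem_image_Ioo
  have hval : φ (lineMap z l τ - x) = (1 - τ) * φ (z - x) := by
    have : lineMap z l τ - x = (1 - τ) • (z - x) + τ • (l - x) := by
      rw [lineMap_apply_module]; module
    simp [this, hl]
  have hlt : |φ (lineMap z l τ - x)| < |φ (z - x)| := by
    rw [hval, abs_mul, abs_of_pos (by linarith)]
    exact mul_lt_of_lt_one_left (abs_pos.2 hzx) (by linarith)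
  exact (hmin _ ⟨hp, by rw [hval]; exact mul_ne_zero (by linarith) hzx⟩).not_gt hlt

end Module

section Normed

variable {V : Type*} [NormedAddCommGroup V] [NormedSpace ℝ V] {s : Set V} {x y : V}

theorem Set.Finite.exists_ne_wbtw_isVisible (hs : s.Finite) (hy : y ∈ s) (hyx : y ≠ x) :
    ∃ z ∈ s, z ≠ x ∧ Wbtw ℝ x z y ∧ IsVisible ℝ s x z := by
  obtain ⟨z, ⟨hz, hzx⟩, hxzy, hvis⟩ :=
    (hs.sdiff (t := {x})).isClosed.exists_wbtw_isVisible (x := x) ⟨hy, hyx⟩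
  exact ⟨z, hz, hzx, hxzy, fun p hp hxpz => hvis ⟨hp, hxpz.ne_left⟩ hxpz⟩

theorem Set.Finite.exists_mem_forall_not_sbtw (hs : s.Finite) (hne : s.Nonempty) :
    ∃ h ∈ s, ∀ x ∈ s, ∀ y ∈ s, ¬ Sbtw ℝ x h y := by
  obtain ⟨h, hh⟩ := (hs.isCompact_convexHull ℝ).extremePoints_nonempty
    (hne.mono (subset_convexHull ℝ s))
  refine ⟨h, extremePoints_convexHull_subset hh, fun x hx y hy hxhy => hxhy.ne_left ?_⟩
  have hseg : h ∈ openSegment ℝ x y := by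
    rw [openSegment_eq_image_lineMap]; exact hxhy.mem_image_Ioo
  exact ((mem_extremePoints.1 hh).2 x (subset_convexHull ℝ s hx) y (subset_convexHull ℝ s hy)
    hseg).1.symm

end Normed

def det2 : ℝ × ℝ →ₗ[ℝ] ℝ × ℝ →ₗ[ℝ] ℝ :=
  LinearMap.mk₂ ℝ (fun u v => u.1 * v.2 - u.2 * v.1)
    (fun _ _ _ => by simp only [Prod.fst_add, Prod.snd_add]; ring)
    (fun _ _ _ => by simp only [Prod.smul_fst, Prod.smul_snd, smul_eq_mul]; ring)
    (fun _ _ _ => by simp only [Prod.fst_add, Prod.snd_add]; ring)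
    (fun _ _ _ => by simp only [Prod.smul_fst, Prod.smul_snd, smul_eq_mul]; ring)

theorem det2_apply (u v : ℝ × ℝ) : det2 u v = u.1 * v.2 - u.2 * v.1 := rfl

@[simp]
theorem det2_self (u : ℝ × ℝ) : det2 u u = 0 := by
  rw [det2_apply, mul_comm, sub_self]

theorem det2_swap (u v : ℝ × ℝ) : det2 v u = -det2 u v := by
  simp only [det2_apply]; ring

theorem exists_eq_smul_of_det2_eq_zero {d w : ℝ × ℝ} (hd : d ≠ 0) (h : det2 d w = 0) :
    ∃ k : ℝ, w = k • d := by
  have hnorm : d.1 ^ 2 + d.2 ^ 2 ≠ 0 := by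
    contrapose! hd
    exact Prod.ext (by nlinarith [sq_nonneg d.1, sq_nonneg d.2] : d.1 = 0)
      (by nlinarith [sq_nonneg d.1, sq_nonneg d.2] : d.2 = 0)
  rw [det2_apply] at h
  refine ⟨(d.1 * w.1 + d.2 * w.2) / (d.1 ^ 2 + d.2 ^ 2), Prod.ext ?_ ?_⟩ <;>
    simp only [Prod.smul_fst, Prod.smul_snd, smul_eq_mul] <;>
    rw [div_mul_eq_mul_div, eq_div_iff hnorm]
  · linear_combination -d.2 * h
  · linear_combination d.1 * h

theorem Collinear.det2_sub_eq_zero {s : Set (ℝ × ℝ)} (hs : Collinear ℝ s) {x y p : ℝ × ℝ}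
    (hx : x ∈ s) (hy : y ∈ s) (hp : p ∈ s) : det2 (y - x) (p - x) = 0 := by
  obtain ⟨v, hv⟩ := (collinear_iff_of_mem hx).1 hs
  obtain ⟨a, rfl⟩ := hv y hy
  obtain ⟨b, rfl⟩ := hv p hp
  simp

theorem exists_det2_sub_ne_zero_of_not_collinear {s : Set (ℝ × ℝ)} (hs : ¬ Collinear ℝ s)
    {x y : ℝ × ℝ} (hxy : x ≠ y) : ∃ p ∈ s, det2 (y - x) (p - x) ≠ 0 := by
  by_contra! hline
  refine hs ((collinear_iff_exists_forall_eq_smul_vadd s).2 ⟨x, y - x, fun p hp => ?_⟩)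
  obtain ⟨k, hk⟩ := exists_eq_smul_of_det2_eq_zero (sub_ne_zero.2 hxy.symm) (hline p hp)
  exact ⟨k, by rw [← hk, vadd_eq_add, sub_add_cancel]⟩

theorem exists_det2_eq_of_sbtw_of_wbtw {h s t p z : ℝ × ℝ} (hp : Sbtw ℝ s p t)
    (hz : Wbtw ℝ h z p) (hzh : z ≠ h) :
    ∃ α β : ℝ, 0 < α ∧ 0 < β ∧ α + β ≤ 1 ∧
      det2 (z - h) (t - h) = α * det2 (s - h) (t - h) ∧
      det2 (s - h) (z - h) = β * det2 (s - h) (t - h) := by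
  obtain ⟨τ, ⟨hτ0, hτ1⟩, rfl⟩ := hp.mem_image_Ioo
  obtain ⟨γ, ⟨hγ0, hγ1⟩, rfl⟩ := hz
  have hγ : 0 < γ := hγ0.lt_of_ne (by rintro rfl; simp at hzh)
  have hzcoord : lineMap h (lineMap s t τ) γ - h =
      (γ * (1 - τ)) • (s - h) + (γ * τ) • (t - h) := by
    simp only [lineMap_apply_module]; module
  refine ⟨γ * (1 - τ), γ * τ, mul_pos hγ (by linarith), by positivity, by nlinarith, ?_, ?_⟩ <;>
    simp only [hzcoord, map_add, map_smul, LinearMap.add_apply, LinearMap.smul_apply, smul_eq_mul,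
      det2_self] <;> ring

section Bivisibility

variable {A B : Finset (ℝ × ℝ)} {x y h : ℝ × ℝ}

theorem bivisAdj_iff : BivisAdj A B x y ↔
    x ≠ y ∧ ((x ∈ A ∧ y ∈ B) ∨ (x ∈ B ∧ y ∈ A)) ∧
      IsVisible ℝ (↑(A ∪ B) : Set (ℝ × ℝ)) x y :=
  and_congr_right fun hxy => and_congr_right fun _ =>
    (isVisible_iff_forall_notMem_openSegment hxy).symm

theorem BivisAdj.symm (hxy : BivisAdj A B x y) : BivisAdj A B y x := by
  obtain ⟨hne, hcol, hvis⟩ := bivisAdj_iff.1 hxy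
  exact bivisAdj_iff.2 ⟨hne.symm, hcol.symm.imp And.symm And.symm, hvis.symm⟩

theorem bivisAdj_comm : BivisAdj B A = BivisAdj A B := by
  ext x y
  simp only [BivisAdj, Finset.union_comm B A, or_comm]

theorem BivisAdj.right_mem (hxy : BivisAdj A B x y) : y ∈ A ∪ B := by
  rcases hxy.2.1 with ⟨-, hy⟩ | ⟨-, hy⟩ <;> simp [hy]

theorem BivisAdj.mem_right (hxy : BivisAdj A B x y) (hAB : Disjoint A B) (hx : x ∈ A) : y ∈ B :=
  hxy.2.1.elim And.right fun h => absurd h.1 (Finset.disjoint_left.1 hAB hx)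

theorem BivisAdj.inter {P : Finset (ℝ × ℝ)} (hxy : BivisAdj A B x y) (hx : x ∈ P) (hy : y ∈ P) :
    BivisAdj (A ∩ P) (B ∩ P) x y := by
  obtain ⟨hne, hcol, hvis⟩ := hxy
  refine ⟨hne, by simp [hx, hy, hcol], fun p hp => hvis p ?_⟩
  rw [← Finset.union_inter_distrib_right] at hp
  exact Finset.mem_of_mem_inter_left hp

theorem exists_bivisAdj_bivisAdj_of_det2_ne_zero {s t : ℝ × ℝ} (hh : h ∈ A) (hsB : s ∈ B)
    (hs : BivisAdj A B h s) (ht : t ∈ A) (hst : det2 (s - h) (t - h) ≠ 0) :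
    ∃ s' t', BivisAdj A B h s' ∧ BivisAdj A B s' t' ∧ t' ≠ h := by
  classical
  set pairs := (B ×ˢ A).filter fun q => BivisAdj A B h q.1 ∧ det2 (q.1 - h) (q.2 - h) ≠ 0
  have mem_pairs {s' t'} (hs' : s' ∈ B) (ht' : t' ∈ A) (hhs' : BivisAdj A B h s')
      (hD' : det2 (s' - h) (t' - h) ≠ 0) : (s', t') ∈ pairs :=
    Finset.mem_filter.2 ⟨Finset.mem_product.2 ⟨hs', ht'⟩, hhs', hD'⟩
  -- A point strictly between `s` and `t` would give, through the first point of `A ∪ B` that `h`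
  -- sees towards it, a pair of smaller area.
  obtain ⟨⟨s, t⟩, hmem, hmin⟩ :=
    pairs.exists_min_image (fun q => |det2 (q.1 - h) (q.2 - h)|) ⟨_, mem_pairs hsB ht hs hst⟩
  simp only [pairs, Finset.mem_filter, Finset.mem_product] at hmem
  obtain ⟨⟨hsB, htA⟩, hhs, hD⟩ := hmem
  have hsmaller {c : ℝ} (hc0 : 0 < c) (hc1 : c < 1) :
      |c * det2 (s - h) (t - h)| < |det2 (s - h) (t - h)| := by
    rw [abs_mul, abs_of_pos hc0]; exact mul_lt_of_lt_one_left (abs_pos.2 hD) hc1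
  have hth : t ≠ h := by rintro rfl; simp at hD
  refine ⟨s, t, hhs, bivisAdj_iff.2 ⟨by rintro rfl; exact hD (det2_self _), Or.inr ⟨hsB, htA⟩,
    fun p hp hspt => ?_⟩, hth⟩
  have hph : p ≠ h := by
    rintro rfl
    exact hD (hspt.wbtw.collinear.det2_sub_eq_zero (by simp) (by simp) (by simp))
  obtain ⟨z, hz, hzh, hhzp, hvis⟩ := (A ∪ B).finite_toSet.exists_ne_wbtw_isVisible hp hph
  obtain ⟨α, β, hα, hβ, hαβ, hzt, hsz⟩ := exists_det2_eq_of_sbtw_of_wbtw hspt hhzp hzh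
  rcases Finset.mem_union.1 hz with hzA | hzB
  · refine (hmin _ (mem_pairs hsB hzA hhs ?_)).not_gt ?_
    · rw [hsz]; exact mul_ne_zero hβ.ne' hD
    · rw [hsz]; exact hsmaller hβ (by linarith)
  · have hhz : BivisAdj A B h z := bivisAdj_iff.2 ⟨hzh.symm, Or.inl ⟨hh, hzB⟩, hvis⟩
    refine (hmin _ (mem_pairs hzB htA hhz ?_)).not_gt ?_
    · rw [hzt]; exact mul_ne_zero hα.ne' hD
    · rw [hzt]; exact hsmaller hα (by linarith)

theorem exists_bivisAdj_bivisAdj_of_not_collinear (hAB : Disjoint A B)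
    (hS : ¬ Collinear ℝ (↑(A ∪ B) : Set (ℝ × ℝ))) {s a : ℝ × ℝ} (hh : h ∈ A)
    (hs : BivisAdj A B h s) (ha : a ∈ A) (hah : a ≠ h) :
    ∃ s' t', BivisAdj A B h s' ∧ BivisAdj A B s' t' ∧ t' ≠ h := by
  have hsB := hs.mem_right hAB hh
  by_cases hoff : ∃ t ∈ A, det2 (s - h) (t - h) ≠ 0
  · obtain ⟨t, ht, hst⟩ := hoff
    exact exists_bivisAdj_bivisAdj_of_det2_ne_zero hh hsB hs ht hst
  push Not at hoff
  -- `A` lies on the line `h s`; the point nearest to that line sees `h`, so it is a neighbour of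
  -- `h` off the line.
  obtain ⟨z, hz, hzoff, hzvis⟩ := (A ∪ B).finite_toSet.exists_isVisible_of_map_sub_eq_zero
    (det2 (s - h)) h (exists_det2_sub_ne_zero_of_not_collinear hS hs.1)
  have hzB : z ∈ B := (Finset.mem_union.1 hz).resolve_left fun hzA => hzoff (hoff z hzA)
  have hzh : z ≠ h := by rintro rfl; simp at hzoff
  have hhz : BivisAdj A B h z :=
    bivisAdj_iff.2 ⟨hzh.symm, Or.inl ⟨hh, hzB⟩, (hzvis h (by simp)).symm⟩
  obtain ⟨k, hk⟩ := exists_eq_smul_of_det2_eq_zero (sub_ne_zero.2 hs.1.symm) (hoff a ha)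
  have hk0 : k ≠ 0 := by rintro rfl; exact hah (sub_eq_zero.1 (by simpa using hk))
  refine exists_bivisAdj_bivisAdj_of_det2_ne_zero hh hzB hhz ha ?_
  rw [hk, map_smul, det2_swap, smul_eq_mul]
  exact mul_ne_zero hk0 (neg_ne_zero.2 hzoff)

open Classical in
noncomputable def prune (A B : Finset (ℝ × ℝ)) (h : ℝ × ℝ) : Finset (ℝ × ℝ) :=
  (A ∪ B).filter fun x => x ≠ h ∧ ∃ y ≠ h, BivisAdj A B x y

theorem mem_prune : x ∈ prune A B h ↔ x ∈ A ∪ B ∧ x ≠ h ∧ ∃ y ≠ h, BivisAdj A B x y := by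
  classical
  simp only [prune, Finset.mem_filter]

theorem prune_subset : prune A B h ⊆ A ∪ B := fun _ hx => (mem_prune.1 hx).1

theorem inter_prune_union_inter_prune : A ∩ prune A B h ∪ B ∩ prune A B h = prune A B h := by
  rw [← Finset.union_inter_distrib_right, Finset.inter_eq_right.2 prune_subset]

theorem bivisAdj_of_notMem_prune (hnbr : ∀ x ∈ A ∪ B, ∃ y, BivisAdj A B x y) (hx : x ∈ A ∪ B)
    (hxh : x ≠ h) (hxP : x ∉ prune A B h) : BivisAdj A B x h := by
  obtain ⟨y, hxy⟩ := hnbr x hx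
  obtain rfl : y = h := by
    by_contra hyh
    exact hxP (mem_prune.2 ⟨hx, hxh, y, hyh, hxy⟩)
  exact hxy

theorem exists_bivisAdj_inter_prune (hx : x ∈ prune A B h) :
    ∃ y, BivisAdj (A ∩ prune A B h) (B ∩ prune A B h) x y := by
  obtain ⟨-, hxh, y, hyh, hxy⟩ := mem_prune.1 hx
  exact ⟨y, hxy.inter hx (mem_prune.2 ⟨hxy.right_mem, hyh, x, hxh, hxy.symm⟩)⟩

theorem BivisAdj.of_inter_prune (hAB : Disjoint A B)
    (hnbr : ∀ x ∈ A ∪ B, ∃ y, BivisAdj A B x y) (hh : h ∈ A)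
    (hext : ∀ x ∈ A ∪ B, ∀ y ∈ A ∪ B, ¬ Sbtw ℝ x h y)
    (hxy : BivisAdj (A ∩ prune A B h) (B ∩ prune A B h) x y) : BivisAdj A B x y := by
  wlog hx : x ∈ A generalizing x y
  · exact (this hxy.symm (hxy.2.1.elim (fun hc => absurd (Finset.mem_of_mem_inter_left hc.1) hx)
      fun hc => Finset.mem_of_mem_inter_left hc.2)).symm
  obtain ⟨hne, hcol, hvis⟩ := bivisAdj_iff.1 hxy
  obtain ⟨hxP, hyB, hyP⟩ : x ∈ prune A B h ∧ y ∈ B ∧ y ∈ prune A B h := by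
    rcases hcol with ⟨hx', hy'⟩ | ⟨hx', -⟩
    · exact ⟨(Finset.mem_inter.1 hx').2, (Finset.mem_inter.1 hy').1, (Finset.mem_inter.1 hy').2⟩
    · exact absurd (Finset.mem_inter.1 hx').1 (Finset.disjoint_left.1 hAB hx)
  refine bivisAdj_iff.2 ⟨hne, Or.inl ⟨hx, hyB⟩, fun p hp hxpy => ?_⟩
  obtain ⟨z, hz, hzx, hxzp, hxz⟩ :=
    (A ∪ B).finite_toSet.exists_ne_wbtw_isVisible hp hxpy.ne_left
  have hxzy : Sbtw ℝ x z y := ⟨hxpy.wbtw.trans_left hxzp, hzx, hxpy.trans_wbtw_left_ne hxzp⟩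
  have hzh : z ≠ h := by
    rintro rfl; exact hext x (prune_subset hxP) y (prune_subset hyP) hxzy
  have hzP : z ∉ prune A B h := fun hzP =>
    hvis (by simpa [inter_prune_union_inter_prune] using hzP) hxzy
  have hzB : z ∈ B := (bivisAdj_of_notMem_prune hnbr hz hzh hzP).symm.mem_right hAB hh
  exact hzP (mem_prune.2 ⟨hz, hzh, x, (mem_prune.1 hxP).2.1,
    bivisAdj_iff.2 ⟨hzx, Or.inr ⟨hzB, hx⟩, hxz.symm⟩⟩)

theorem isVisible_of_mem_prune_of_collinear (hAB : Disjoint A B)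
    (hS : ¬ Collinear ℝ (↑(A ∪ B) : Set (ℝ × ℝ))) (hnbr : ∀ x ∈ A ∪ B, ∃ y, BivisAdj A B x y)
    (hh : h ∈ A) (hP : Collinear ℝ (↑(prune A B h) : Set (ℝ × ℝ))) (hx : x ∈ prune A B h) :
    IsVisible ℝ (↑(A ∪ B) : Set (ℝ × ℝ)) h x := by
  obtain ⟨-, hxh, y, hyh, hxy⟩ := mem_prune.1 hx
  have hy : y ∈ prune A B h := mem_prune.2 ⟨hxy.right_mem, hyh, x, hxh, hxy.symm⟩
  have honline : ∀ p ∈ prune A B h, det2 (y - x) (p - x) = 0 := fun p hp =>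
    hP.det2_sub_eq_zero hx hy hp
  obtain ⟨z, hz, hzoff, hzvis⟩ := (A ∪ B).finite_toSet.exists_isVisible_of_map_sub_eq_zero
    (det2 (y - x)) x (exists_det2_sub_ne_zero_of_not_collinear hS hxy.1)
  obtain rfl : z = h := by
    by_contra hzh
    have hzP : z ∉ prune A B h := fun hzP => hzoff (honline z hzP)
    have hzB : z ∈ B := (bivisAdj_of_notMem_prune hnbr hz hzh hzP).symm.mem_right hAB hh
    obtain ⟨a, haA, haP⟩ : ∃ a ∈ A, a ∈ prune A B h := by
      rcases hxy.2.1 with ⟨hxA, -⟩ | ⟨-, hyA⟩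
      exacts [⟨x, hxA, hx⟩, ⟨y, hyA, hy⟩]
    have hza : z ≠ a := by rintro rfl; exact hzoff (honline z haP)
    exact hzP (mem_prune.2 ⟨hz, hzh, a, (mem_prune.1 haP).2.1,
      bivisAdj_iff.2 ⟨hza, Or.inr ⟨hzB, haA⟩, hzvis a (honline a haP)⟩⟩)
  exact hzvis x (by simp)

theorem reflTransGen_of_mem_prune_of_collinear (hAB : Disjoint A B)
    (hS : ¬ Collinear ℝ (↑(A ∪ B) : Set (ℝ × ℝ))) (hnbr : ∀ x ∈ A ∪ B, ∃ y, BivisAdj A B x y)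
    (hh : h ∈ A) (hP : Collinear ℝ (↑(prune A B h) : Set (ℝ × ℝ))) (hx : x ∈ prune A B h) :
    ReflTransGen (BivisAdj A B) x h := by
  have hsees {b} (hbB : b ∈ B) (hbP : b ∈ prune A B h) : BivisAdj A B b h :=
    bivisAdj_iff.2 ⟨(mem_prune.1 hbP).2.1, Or.inr ⟨hbB, hh⟩,
      (isVisible_of_mem_prune_of_collinear hAB hS hnbr hh hP hbP).symm⟩
  obtain ⟨hxS, hxh, y, hyh, hxy⟩ := mem_prune.1 hx
  rcases Finset.mem_union.1 hxS with hxA | hxB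
  · have hyP : y ∈ prune A B h := mem_prune.2 ⟨hxy.right_mem, hyh, x, hxh, hxy.symm⟩
    exact .tail (.single hxy) (hsees (hxy.mem_right hAB hxA) hyP)
  · exact .single (hsees hxB hx)

theorem exists_mem_prune_bivisAdj (hAB : Disjoint A B)
    (hS : ¬ Collinear ℝ (↑(A ∪ B) : Set (ℝ × ℝ))) (hnbr : ∀ x ∈ A ∪ B, ∃ y, BivisAdj A B x y)
    (hh : h ∈ A) (hx : x ∈ prune A B h) : ∃ s ∈ prune A B h, BivisAdj A B s h := by
  obtain ⟨a, haA, hah⟩ : ∃ a ∈ A, a ≠ h := by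
    obtain ⟨-, hxh, y, hyh, hxy⟩ := mem_prune.1 hx
    rcases hxy.2.1 with ⟨hxA, -⟩ | ⟨-, hyA⟩
    exacts [⟨x, hxA, hxh⟩, ⟨y, hyA, hyh⟩]
  obtain ⟨s, t, hhs, hst, hth⟩ := exists_bivisAdj_bivisAdj_of_not_collinear hAB hS hh
    (hnbr h (Finset.mem_union_left _ hh)).choose_spec haA hah
  exact ⟨s, mem_prune.2 ⟨hhs.right_mem, hhs.1.symm, t, hth, hst⟩, hhs.symm⟩

instance : Std.Symm (BivisAdj A B) := ⟨fun _ _ hxy => hxy.symm⟩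

theorem reflTransGen_bivisAdj (hAB : Disjoint A B) (hS : ¬ Collinear ℝ (↑(A ∪ B) : Set (ℝ × ℝ)))
    (hnbr : ∀ x ∈ A ∪ B, ∃ y, BivisAdj A B x y) (hx : x ∈ A ∪ B) (hy : y ∈ A ∪ B) :
    ReflTransGen (BivisAdj A B) x y := by
  induction hn : (A ∪ B).card using Nat.strong_induction_on generalizing A B x y with
  | _ n ih =>
  obtain ⟨h, hhS, hext⟩ := (A ∪ B).finite_toSet.exists_mem_forall_not_sbtw ⟨x, hx⟩
  wlog hh : h ∈ A generalizing A B
  · rw [← bivisAdj_comm]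
    rw [Finset.union_comm] at hx hy hhS hext hn hS
    exact this hAB.symm hS (by rwa [bivisAdj_comm, Finset.union_comm]) hx hy hn hhS hext
      ((Finset.mem_union.1 hhS).resolve_right hh)
  suffices hreach : ∀ x ∈ A ∪ B, ReflTransGen (BivisAdj A B) x h from
    (hreach x hx).trans (symm (hreach y hy))
  intro x hx
  by_cases hxh : x = h
  · rw [hxh]
  by_cases hxP : x ∉ prune A B h
  · exact .single (bivisAdj_of_notMem_prune hnbr hx hxh hxP)
  push Not at hxP
  by_cases hP : Collinear ℝ (↑(prune A B h) : Set (ℝ × ℝ))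
  · exact reflTransGen_of_mem_prune_of_collinear hAB hS hnbr hh hP hxP
  have hconn : ∀ x ∈ prune A B h, ∀ y ∈ prune A B h, ReflTransGen (BivisAdj A B) x y := by
    intro x hx y hy
    rw [← inter_prune_union_inter_prune] at hx hy hP
    refine ReflTransGen.mono (fun _ _ => BivisAdj.of_inter_prune hAB hnbr hh hext) _ _
      (ih _ ?_ (hAB.mono Finset.inter_subset_left Finset.inter_subset_left) hP
        (fun z hz => ?_) hx hy rfl)
    · rw [← hn, inter_prune_union_inter_prune]
      exact Finset.card_lt_card (Finset.ssubset_iff_of_subset prune_subset |>.2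
        ⟨h, hhS, fun hhP => (mem_prune.1 hhP).2.1 rfl⟩)
    · rw [inter_prune_union_inter_prune] at hz
      exact exists_bivisAdj_inter_prune hz
  obtain ⟨s, hsP, hsh⟩ := exists_mem_prune_bivisAdj hAB hS hnbr hh hxP
  exact (hconn x hxP s hsP).tail hsh

theorem reachable_of_reflTransGen (hxy : ReflTransGen (BivisAdj A B) x y)
    (hx : x ∈ A ∪ B) (hy : y ∈ A ∪ B) : (bivisibilityGraph A B).Reachable ⟨x, hx⟩ ⟨y, hy⟩ := by
  induction hxy with
  | refl => rfl
  | tail _ hzy ih => exact (ih hzy.symm.right_mem).trans (SimpleGraph.Adj.reachable hzy)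

end Bivisibility

/-- Let `A` and `B` be disjoint finite point sets with `A ∪ B` not collinear. Then the
bivisibility graph `B(A,B)` is connected if and only if it has no isolated vertices. -/
theorem bivisibility_connected_iff_no_isolated
    (A B : Finset (ℝ × ℝ)) (hAB : Disjoint A B)
    (hncol : ¬ Collinear ℝ ((A ∪ B : Finset (ℝ × ℝ)) : Set (ℝ × ℝ))) :
    (bivisibilityGraph A B).Connected ↔
      ∀ v : {p : ℝ × ℝ // p ∈ A ∪ B}, ∃ w, (bivisibilityGraph A B).Adj v w := by
  obtain ⟨p, hp⟩ : (A ∪ B).Nonempty := Finset.nonempty_iff_ne_empty.2 fun he =>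
    hncol (by rw [he, Finset.coe_empty]; exact collinear_empty ℝ _)
  refine ⟨fun hconn v => ?_, fun hnbr => ?_⟩
  · obtain ⟨q, hq, hqp⟩ : ∃ q ∈ A ∪ B, q ≠ p := by
      by_contra! hsub
      exact hncol ((collinear_singleton ℝ p).subset fun q hq => hsub q hq)
    have : Nontrivial {p : ℝ × ℝ // p ∈ A ∪ B} := ⟨⟨q, hq⟩, ⟨p, hp⟩, by simpa using hqp⟩
    exact hconn.preconnected.exists_adj_of_nontrivial v
  · have hnbr' : ∀ x ∈ A ∪ B, ∃ y, BivisAdj A B x y := fun x hx =>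
      let ⟨w, hw⟩ := hnbr ⟨x, hx⟩; ⟨w, hw⟩
    exact (SimpleGraph.connected_iff _).2 ⟨fun u v =>
      reachable_of_reflTransGen (reflTransGen_bivisAdj hAB hncol hnbr' u.2 v.2) _ _, ⟨⟨p, hp⟩⟩⟩
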